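/- Let A = {*2} be the game whose unique option is nim 2, let B = {*3; A} be the game whose options are nim 3 and A, and let G = {*0; A; B} be the game whose options are the empty game 0, A and B. Then the disjunctive sum G + nim 2 is misère-indistinguishable from A. -/

import Mathlib

/-- An impartial game: a position is given by the list of its options
(the positions reachable in one move); both players have the same moves. -/
inductive Game : Type
  | node : List Game → Game

namespace Game

/-- The options of a position. -/
def options : Game → List Game
  | node l => l

/-- Disjunctive sum of two games: a move is made in exactly one component. -/
def add : Game → Game → Game
  | node l, node r =>
      node ((l.attach.map fun x => add x.1 (node r)) ++
            (r.attach.map fun y => add (node l) y.1))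
termination_by g h => sizeOf g + sizeOf h
decreasing_by
  · have := List.sizeOf_lt_of_mem x.2; simp_wf; (try simp only [Game.node.sizeOf_spec] at *); omega
  · have := List.sizeOf_lt_of_mem y.2; simp_wf; (try simp only [Game.node.sizeOf_spec] at *); omega

/-- Misère win (for the player to move): the game has no options,
or some option is a misère loss. -/
def MisereWin : Game → Prop
  | node l => l = [] ∨ ∃ x : {a // a ∈ l}, ¬ MisereWin x.1
decreasing_by
  simp_wf; have := List.sizeOf_lt_of_mem x.2; omega

/-- Misère indistinguishability: adding any game `T` yields the same misère outcome. -/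
def Indist (G H : Game) : Prop :=
  ∀ T : Game, MisereWin (add G T) ↔ MisereWin (add H T)

/-- The Nim-heap of size `n`, whose options are `nim 0, …, nim (n-1)`. -/
def nim : ℕ → Game
  | 0 => node []
  | n + 1 => node ((nim n).options ++ [nim n])

/-- Normal-play win (for the player to move): some option is a normal-play loss.
A player unable to move loses. -/
def NormalWin : Game → Prop
  | node l => ∃ x : {a // a ∈ l}, ¬ NormalWin x.1
decreasing_by
  simp_wf; have := List.sizeOf_lt_of_mem x.2; omega

/-- The Grundy value: the mex of the Grundy values of the options. -/
noncomputable def grundy : Game → ℕ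
  | node l => sInf {n : ℕ | ∀ x : {a // a ∈ l}, grundy x.1 ≠ n}
decreasing_by
  simp_wf; have := List.sizeOf_lt_of_mem x.2; omega

/-- The height of a game: the maximal number of moves in a play from it. -/
def height : Game → ℕ
  | node l => (l.attach.map fun x => height x.1 + 1).foldr max 0
decreasing_by
  simp_wf; have := List.sizeOf_lt_of_mem x.2; omega

/-- A canonical tree: duplicate options are removed, hereditarily. -/
def Canonical : Game → Prop
  | node l => l.Nodup ∧ ∀ x : {a // a ∈ l}, Canonical x.1
decreasing_by
  simp_wf; have := List.sizeOf_lt_of_mem x.2; omega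

/-- Extensional (set-theoretic) equality of game trees. -/
def ExtEq : Game → Game → Prop
  | node l, node r =>
      (∀ x : {a // a ∈ l}, ∃ y : {b // b ∈ r}, ExtEq x.1 y.1) ∧
      (∀ y : {b // b ∈ r}, ∃ x : {a // a ∈ l}, ExtEq x.1 y.1)
termination_by g _ => sizeOf g
decreasing_by
  · have := List.sizeOf_lt_of_mem x.2; simp_wf; (try simp only [Game.node.sizeOf_spec] at *); omega
  · have := List.sizeOf_lt_of_mem x.2; simp_wf; (try simp only [Game.node.sizeOf_spec] at *); omega

/-- The disjunctive sum of `n` copies of a game. -/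
def copies : ℕ → Game → Game
  | 0, _ => node []
  | n + 1, g => add g (copies n g)

/-- `G` is a reducer of `H` if `H` is obtained from `G` by adding reversible
moves `R₁, R₂, …`: the options of `H` are those of `G` together with the `Rⱼ`,
each `Rⱼ` having `G` among its options; when `G` is empty one additionally
requires `H` to be a misère win. -/
def Reducer (G H : Game) : Prop :=
  ∃ Rs : List Game,
    (∀ x, x ∈ H.options ↔ x ∈ G.options ∨ x ∈ Rs) ∧
    (∀ R ∈ Rs, G ∈ R.options) ∧
    (G.options = [] → MisereWin H)

/-- A canonical tree is reduced if its only reducer is itself (as a set of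
options) and all of its options are reduced. -/
def Reduced : Game → Prop
  | node l =>
      (∀ G, Reducer G (node l) → ∀ x, x ∈ G.options ↔ x ∈ l) ∧
      ∀ x : {a // a ∈ l}, Reduced x.1
decreasing_by
  simp_wf; have := List.sizeOf_lt_of_mem x.2; omega

end Game

/-! Misère indistinguishability `X ≡ Y` is proved by induction on the distinguishing game `T`:
a move in `T` is answered by the same move in the other sum, so it suffices that whenever a move
`X → X'` leaves a misère loss `X' + T`, the sum `Y + T` is a misère win, and vice versa.
With this criterion one obtains in turn `*1 + *1 ≡ 0`, `*3 + *1 ≡ *2`, `B + *1 ≡ A` and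
`G + *2 ≡ A`, each step answering the critical moves by means of the previous equivalence. -/

namespace Game

theorem induction {P : Game → Prop} (node : ∀ l, (∀ x ∈ l, P x) → P (Game.node l)) :
    ∀ X, P X
  | Game.node l => node l fun x _ => induction node x
termination_by X => sizeOf X
decreasing_by simp_wf; have := List.sizeOf_lt_of_mem ‹x ∈ l›; omega

@[simp]
theorem options_node (l : List Game) : (node l).options = l := rfl

theorem node_options (X : Game) : node X.options = X := by cases X; rfl

theorem options_add (X Y : Game) :
    (add X Y).options = X.options.map (add · Y) ++ Y.options.map (add X ·) := by
  obtain ⟨l⟩ := X; obtain ⟨r⟩ := Y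
  rw [add]
  simp [List.map_subtype]

theorem misereWin_iff (X : Game) :
    MisereWin X ↔ X.options = [] ∨ ∃ x ∈ X.options, ¬ MisereWin x := by
  obtain ⟨l⟩ := X
  rw [MisereWin]; simp

@[simp]
theorem nil_add (X : Game) : add (node []) X = X := by
  induction X using Game.induction with
  | node l ih =>
    rw [← node_options (add _ _), options_add]
    simp [List.map_congr_left ih]

@[simp]
theorem add_nil (X : Game) : add X (node []) = X := by
  induction X using Game.induction with
  | node l ih =>
    rw [← node_options (add _ _), options_add]
    simp [List.map_congr_left ih]

theorem mem_options_add_left {X X' : Game} (Y : Game) (h : X' ∈ X.options) :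
    add X' Y ∈ (add X Y).options := by
  rw [options_add]; exact List.mem_append_left _ (List.mem_map_of_mem h)

theorem mem_options_add_right (X : Game) {Y Y' : Game} (h : Y' ∈ Y.options) :
    add X Y' ∈ (add X Y).options := by
  rw [options_add]; exact List.mem_append_right _ (List.mem_map_of_mem h)

theorem misereWin_of_mem_options {X X' : Game} (h : X' ∈ X.options) (hX' : ¬ MisereWin X') :
    MisereWin X :=
  (misereWin_iff X).2 (Or.inr ⟨X', h, hX'⟩)

theorem misereWin_option_of_not_misereWin {X X' : Game} (h : X' ∈ X.options)
    (hX : ¬ MisereWin X) :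
    MisereWin X' :=
  not_not.1 fun hX' => hX (misereWin_of_mem_options h hX')

theorem misereWin_add_of_options {X Y T : Game} (hT : T.options ≠ [])
    (hX : ∀ X' ∈ X.options, ¬ MisereWin (add X' T) → MisereWin (add Y T))
    (ht : ∀ t ∈ T.options, MisereWin (add Y t) → MisereWin (add X t))
    (h : MisereWin (add X T)) : MisereWin (add Y T) := by
  rcases (misereWin_iff _).1 h with hnil | ⟨x, hx, hlose⟩
  · simp [options_add, hT] at hnil
  rw [options_add] at hx
  simp only [List.mem_append, List.mem_map] at hx
  rcases hx with ⟨X', hX', rfl⟩ | ⟨t, htT, rfl⟩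
  · exact hX X' hX' hlose
  · exact misereWin_of_mem_options (mem_options_add_right Y htT) (mt (ht t htT) hlose)

-- `h₀` covers `T = 0`, where `X + T` or `Y + T` may have no options.
theorem indist_of_options {X Y : Game} (h₀ : MisereWin X ↔ MisereWin Y)
    (hX : ∀ X' ∈ X.options, ∀ T, ¬ MisereWin (add X' T) → MisereWin (add Y T))
    (hY : ∀ Y' ∈ Y.options, ∀ T, ¬ MisereWin (add Y' T) → MisereWin (add X T)) :
    Indist X Y := by
  intro T
  induction T using Game.induction with
  | node ts ih =>
    rcases ts with _ | ⟨_, _⟩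
    · simpa using h₀
    exact ⟨misereWin_add_of_options (by simp) (fun X' h => hX X' h _) (fun t h => (ih t h).2),
      misereWin_add_of_options (by simp) (fun Y' h => hY Y' h _) (fun t h => (ih t h).1)⟩

theorem misereWin_of_forall_options {X Y : Game} (hXn : X.options ≠ [])
    (hX : ∀ X' ∈ X.options, ¬ MisereWin X' → MisereWin Y) (h : MisereWin X) :
    MisereWin Y := by
  rcases (misereWin_iff X).1 h with hnil | ⟨X', hX', hlose⟩
  · exact absurd hnil hXn
  · exact hX X' hX' hlose

theorem indist_of_options_of_ne_nil {X Y : Game} (hXn : X.options ≠ []) (hYn : Y.options ≠ [])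
    (hX : ∀ X' ∈ X.options, ∀ T, ¬ MisereWin (add X' T) → MisereWin (add Y T))
    (hY : ∀ Y' ∈ Y.options, ∀ T, ¬ MisereWin (add Y' T) → MisereWin (add X T)) :
    Indist X Y := by
  refine indist_of_options
    ⟨misereWin_of_forall_options hXn ?_, misereWin_of_forall_options hYn ?_⟩ hX hY
  · intro X' hX' hlose
    simpa using hX X' hX' (node []) (by simpa using hlose)
  · intro Y' hY' hlose
    simpa using hY Y' hY' (node []) (by simpa using hlose)

@[simp]
theorem nim_zero : nim 0 = node [] := rfl

@[simp]
theorem options_nim_succ (n : ℕ) : (nim (n + 1)).options = (nim n).options ++ [nim n] := rfl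

theorem misereWin_nil : MisereWin (node []) := (misereWin_iff _).2 (Or.inl rfl)

theorem not_misereWin_nim_one : ¬ MisereWin (nim 1) := by
  intro h
  rcases (misereWin_iff _).1 h with hnil | ⟨x, hx, hlose⟩
  · simp at hnil
  · obtain rfl : x = node [] := by simpa using hx
    exact hlose misereWin_nil

def A : Game := node [nim 2]

def B : Game := node [nim 3, A]

def G : Game := node [node [], A, B]

@[simp] theorem options_A : A.options = [nim 2] := rfl

@[simp] theorem options_B : B.options = [nim 3, A] := rfl

@[simp] theorem options_G : G.options = [node [], A, B] := rfl

theorem indist_nim_one_add_nim_one : Indist (add (nim 1) (nim 1)) (nim 0) := by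
  refine indist_of_options ⟨fun _ => misereWin_nil, fun _ => ?_⟩ ?_ (by simp)
  · exact misereWin_of_mem_options (X' := nim 1) (by simp [options_add]) not_misereWin_nim_one
  · intro X' hX' T hT
    obtain rfl : X' = nim 1 := by simpa [options_add] using hX'
    simpa using
      misereWin_option_of_not_misereWin (mem_options_add_left T (X' := nim 0) (by simp)) hT

theorem indist_nim_three_add_nim_one : Indist (add (nim 3) (nim 1)) (nim 2) := by
  have h₁₁ := indist_nim_one_add_nim_one
  refine indist_of_options_of_ne_nil (by simp [options_add]) (by simp) ?_ ?_
  · intro X' hX' T hT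
    obtain rfl | rfl | rfl | rfl :
        X' = nim 1 ∨ X' = add (nim 1) (nim 1) ∨ X' = add (nim 2) (nim 1) ∨ X' = nim 3 := by
      simpa [options_add] using hX'
    · exact misereWin_of_mem_options (mem_options_add_left T (by simp)) hT
    · refine misereWin_of_mem_options (mem_options_add_left T (X' := nim 0) (by simp)) ?_
      simpa [h₁₁ T] using hT
    · simpa using misereWin_option_of_not_misereWin
        (mem_options_add_left T (mem_options_add_right (nim 2) (Y' := nim 0) (by simp))) hT
    · exact misereWin_option_of_not_misereWin (mem_options_add_left T (by simp)) hT
  · intro Y' hY' T hT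
    obtain rfl | rfl : Y' = node [] ∨ Y' = nim 1 := by simpa using hY'
    · refine misereWin_of_mem_options
        (mem_options_add_left T (mem_options_add_left (nim 1) (X' := nim 1) (by simp))) ?_
      simpa [h₁₁ T] using hT
    · exact misereWin_of_mem_options
        (mem_options_add_left T (X' := nim 1) (by simp [options_add])) hT

theorem indist_B_add_nim_one : Indist (add B (nim 1)) A := by
  have h₃₁ := indist_nim_three_add_nim_one
  refine indist_of_options_of_ne_nil (by simp [options_add]) (by simp) ?_ ?_
  · intro X' hX' T hT
    obtain rfl | rfl | rfl : X' = add (nim 3) (nim 1) ∨ X' = add A (nim 1) ∨ X' = B := by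
      simpa [options_add] using hX'
    · exact misereWin_of_mem_options (mem_options_add_left T (by simp)) ((h₃₁ T).not.1 hT)
    · simpa using misereWin_option_of_not_misereWin
        (mem_options_add_left T (mem_options_add_right A (Y' := nim 0) (by simp))) hT
    · exact misereWin_option_of_not_misereWin (mem_options_add_left T (by simp)) hT
  · intro Y' hY' T hT
    obtain rfl : Y' = nim 2 := by simpa using hY'
    exact misereWin_of_mem_options (mem_options_add_left T (by simp [options_add]))
      ((h₃₁ T).not.2 hT)

theorem indist_G_add_nim_two : Indist (add G (nim 2)) A := by
  have hB₁ := indist_B_add_nim_one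
  refine indist_of_options_of_ne_nil (by simp [options_add]) (by simp) ?_ ?_
  · intro X' hX' T hT
    obtain rfl | rfl | rfl | rfl | rfl :
        X' = nim 2 ∨ X' = add A (nim 2) ∨ X' = add B (nim 2) ∨ X' = G ∨
          X' = add G (nim 1) := by
      simpa [options_add] using hX'
    · exact misereWin_of_mem_options (mem_options_add_left T (by simp)) hT
    · simpa using misereWin_option_of_not_misereWin
        (mem_options_add_left T (mem_options_add_right A (Y' := nim 0) (by simp))) hT
    · exact (hB₁ T).1 (misereWin_option_of_not_misereWin
        (mem_options_add_left T (mem_options_add_right B (Y' := nim 1) (by simp))) hT)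
    · exact misereWin_option_of_not_misereWin (mem_options_add_left T (by simp)) hT
    · exact (hB₁ T).1 (misereWin_option_of_not_misereWin
        (mem_options_add_left T (mem_options_add_left (nim 1) (by simp))) hT)
  · intro Y' hY' T hT
    obtain rfl : Y' = nim 2 := by simpa using hY'
    exact misereWin_of_mem_options (mem_options_add_left T (by simp [options_add])) hT

end Game

open Game in
/-- With `A = {*2}`, `B = {*3; A}` and `G = {*0; A; B}`, the
sum `G + nim 2` is misère-indistinguishable from `A`. -/
theorem stmt16 :
    Indist
      (add (Game.node [Game.node [], Game.node [nim 2],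
              Game.node [nim 3, Game.node [nim 2]]]) (nim 2))
      (Game.node [nim 2]) :=
  indist_G_add_nim_two
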